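/- arXiv:2410.10444 — 2 statements merged into one kernel-verified Lean document; each statement's English description precedes it below -/
import Mathlib

section
/- For every θ ≥ 1/4, the function R(z) = (1 + (1-2θ)z + (1/2 - 2θ + θ²)z²)/(1 - θz)² satisfies |R(z)| ≤ 1 for all z ∈ ℂ with Re z ≤ 0 (A-stability). -/
/-!
Write `z = x + iy` with `x ≤ 0` and `r² = |z|²`. Expanding both squared moduli, the difference
`|1 - θz|⁴ - |1 + (1 - 2θ)z + (1/2 - 2θ + θ²)z²|²` has no `r²` term and equals
`-2x + (8θ - 2)x² - (10θ² - 6θ + 1)x r² + (4θ - 1)(θ - 1/2)² r⁴`,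
a sum of nonnegative terms once `x ≤ 0` and `θ ≥ 1/4` (note `10θ² - 6θ + 1 > 0` for all `θ`).
-/

open Complex

lemma one_sub_ofReal_mul_ne_zero {θ : ℝ} (hθ : 0 ≤ θ) {z : ℂ} (hz : z.re ≤ 0) :
    1 - (θ : ℂ) * z ≠ 0 := by
  intro h
  have hre := congrArg Complex.re h
  simp only [sub_re, one_re, re_ofReal_mul, zero_re] at hre
  nlinarith

lemma normSq_one_sub_ofReal_mul_sq (θ : ℝ) (z : ℂ) :
    normSq ((1 - (θ : ℂ) * z) ^ 2) =
      normSq (1 + (1 - 2 * (θ : ℂ)) * z + (1/2 - 2 * (θ : ℂ) + (θ : ℂ) ^ 2) * z ^ 2)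
        + (-2 * z.re + (8 * θ - 2) * z.re ^ 2 - (10 * θ ^ 2 - 6 * θ + 1) * z.re * normSq z
          + (4 * θ - 1) * (θ - 1/2) ^ 2 * normSq z ^ 2) := by
  simp only [normSq_apply, add_re, add_im, sub_re, sub_im, mul_re, mul_im, pow_two,
    one_re, one_im, ofReal_re, ofReal_im, re_ofNat, im_ofNat, div_re, div_im]
  ring

lemma stability_defect_nonneg {θ : ℝ} (hθ : 1/4 ≤ θ) {x s : ℝ} (hx : x ≤ 0) (hs : 0 ≤ s) :
    0 ≤ -2 * x + (8 * θ - 2) * x ^ 2 - (10 * θ ^ 2 - 6 * θ + 1) * x * s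
      + (4 * θ - 1) * (θ - 1/2) ^ 2 * s ^ 2 := by
  have hq : 0 ≤ 10 * θ ^ 2 - 6 * θ + 1 := by nlinarith [sq_nonneg (10 * θ - 3)]
  have h4 : 0 ≤ 4 * θ - 1 := by linarith
  have hxs : 0 ≤ (10 * θ ^ 2 - 6 * θ + 1) * (-x) * s :=
    mul_nonneg (mul_nonneg hq (neg_nonneg.mpr hx)) hs
  have hr4 : 0 ≤ (4 * θ - 1) * (θ - 1/2) ^ 2 * s ^ 2 := by positivity
  linarith [mul_nonneg (by linarith : (0:ℝ) ≤ 8 * θ - 2) (sq_nonneg x)]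

/-- A-stability: for every θ ≥ 1/4, the DIRK stability function satisfies
|R(z)| ≤ 1 for all z in the closed left half-plane. -/
theorem dirk_stability_A_stable
    (θ : ℝ) (hθ : 1/4 ≤ θ) (R : ℂ → ℂ)
    (hR : ∀ z : ℂ, z.re ≤ 0 →
      R z = (1 + (1 - 2*(θ:ℂ)) * z + (1/2 - 2*(θ:ℂ) + (θ:ℂ)^2) * z^2)
        / (1 - (θ:ℂ) * z)^2) :
    ∀ z : ℂ, z.re ≤ 0 → ‖R z‖ ≤ 1 := by
  intro z hz
  have hden : 0 < ‖(1 - (θ : ℂ) * z) ^ 2‖ :=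
    norm_pos_iff.mpr (pow_ne_zero 2 (one_sub_ofReal_mul_ne_zero (by linarith) hz))
  rw [hR z hz, norm_div, div_le_one hden, ← sq_le_sq₀ (norm_nonneg _) hden.le,
    Complex.sq_norm, Complex.sq_norm, normSq_one_sub_ofReal_mul_sq]
  exact le_add_of_nonneg_right (stability_defect_nonneg hθ hz (normSq_nonneg z))
end

section
/- On the negative real axis, R(x) = (1 + (1-2θ)x + (1/2 - 2θ + θ²)x²)/(1 - θx)² with θ = 1 - √2/2 satisfies |R(x)| < 1 for all x < 0. -/
/-- For θ = 1 - √2/2 the DIRK stability function satisfies |R(x)| < 1 for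
every real x < 0. -/
theorem dirk_stability_strict_on_negative_axis
    (θ : ℝ) (hθ : θ = 1 - Real.sqrt 2 / 2) (R : ℝ → ℝ)
    (hR : ∀ x, R x = (1 + (1 - 2*θ) * x + (1/2 - 2*θ + θ^2) * x^2)
      / (1 - θ * x)^2) :
    ∀ x : ℝ, x < 0 → |R x| < 1 := by
  intro x hx
  have hs2 : Real.sqrt 2 ^ 2 = 2 := Real.sq_sqrt (by norm_num)
  have hs2lb : (1 : ℝ) < Real.sqrt 2 := by
    nlinarith [Real.sqrt_nonneg 2]
  have hs2ub : Real.sqrt 2 < 3/2 := by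
    nlinarith [Real.sqrt_nonneg 2]
  have hθpos : 0 < θ := by rw [hθ]; nlinarith
  have hd : 0 < 1 - θ * x := by nlinarith
  have hd2 : 0 < (1 - θ * x)^2 := by positivity
  rw [hR, abs_lt]
  constructor
  · rw [lt_div_iff₀ hd2]
    nlinarith [mul_nonneg (show (0:ℝ) ≤ 3/2 - Real.sqrt 2 by nlinarith) (sq_nonneg x),
      mul_pos (show (0:ℝ) < 3 - 2*Real.sqrt 2 by nlinarith) (neg_pos.2 hx)]
  · rw [div_lt_one hd2]
    nlinarith [sq_nonneg x, mul_pos hθpos (neg_pos.2 hx)]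
end
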